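/- Let K be a field, S = K[x_1, ..., x_n] with n ≥ 2, and I ⊆ S a monomial ideal with stabilization index β (i.e., β is minimal with I_γ = I_β for all γ ≥ β, where I ∩ x_n^k K[x_1, ..., x_{n-1}] = x_n^k I_k). If for each k with 0 ≤ k ≤ β the ideal I_k has a Stanley decomposition I_k = ⊕_{i=1}^{r_k} u_{i,k} K[Z_{i,k}] with Z_{i,k} ⊆ {x_1, ..., x_{n-1}}, then I = (⊕_{0 ≤ k < β} ⊕_{i=1}^{r_k} u_{i,k} x_n^k K[Z_{i,k}]) ⊕ (⊕_{i=1}^{r_β} u_{i,β} x_n^β K[Z_{i,β} ∪ {x_n}]) is a Stanley decomposition of I. -/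

import Mathlib

open MvPolynomial

/-- The Stanley space `u K[Z]`, with `u` given by its exponent vector `d`. -/
noncomputable def stanleySpace (K : Type*) [Field K] {σ : Type*} (d : σ →₀ ℕ)
    (Z : Finset σ) : Submodule K (MvPolynomial σ K) :=
  Submodule.span K
    {m | ∃ e : σ →₀ ℕ, (e.support : Set σ) ⊆ (Z : Set σ) ∧ m = monomial (d + e) (1 : K)}

def IsMonomialIdeal {K : Type*} [Field K] {σ : Type*}
    (I : Ideal (MvPolynomial σ K)) : Prop :=
  ∃ G : Set (σ →₀ ℕ), I = Ideal.span ((fun d => monomial d (1 : K)) '' G)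

def IsSquarefreeMonomialIdeal {K : Type*} [Field K] {σ : Type*}
    (I : Ideal (MvPolynomial σ K)) : Prop :=
  ∃ G : Set (σ →₀ ℕ), (∀ d ∈ G, ∀ i, d i ≤ 1) ∧
    I = Ideal.span ((fun d => monomial d (1 : K)) '' G)

/-- `I^c`. -/
noncomputable def compSpan (K : Type*) [Field K] {σ : Type*}
    (I : Ideal (MvPolynomial σ K)) : Submodule K (MvPolynomial σ K) :=
  Submodule.span K
    {m | ∃ d : σ →₀ ℕ, monomial d (1 : K) ∉ I ∧ m = monomial d (1 : K)}

/-- `x_{n+1}^k V ⊆ K[x_1,…,x_{n+1}]` for a subspace `V ⊆ K[x_1,…,x_n]`. -/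
noncomputable def shiftUp (K : Type*) [Field K] (n : ℕ) (k : ℕ)
    (V : Submodule K (MvPolynomial (Fin n) K)) :
    Submodule K (MvPolynomial (Fin (n + 1)) K) :=
  (V.map (rename (Fin.castSucc : Fin n → Fin (n + 1)) :
      MvPolynomial (Fin n) K →ₐ[K] MvPolynomial (Fin (n + 1)) K).toLinearMap).map
    (LinearMap.mulLeft K ((X (Fin.last n) : MvPolynomial (Fin (n + 1)) K) ^ k))

/-- The Stanley space `u x_{n+1}^k K[Z]` for `u ∈ K[x_1,…,x_n]` with exponent vector `d`. -/
noncomputable def janetPiece (K : Type*) [Field K] (n : ℕ) (k : ℕ) (d : Fin n →₀ ℕ)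
    (Z : Finset (Fin (n + 1))) : Submodule K (MvPolynomial (Fin (n + 1)) K) :=
  stanleySpace K
    (Finsupp.mapDomain (Fin.castSucc : Fin n → Fin (n + 1)) d +
      Finsupp.single (Fin.last n) k) Z

/-!
Every space involved is spanned by the monomials it contains, and such a space is determined by
its set of exponents (`MvPolynomial.restrictSupport`): sums of spaces become unions and
independence becomes pairwise disjointness. Write an exponent of `K[x_1,…,x_{n+1}]` as a pair
`(d, k)`, with `d` the exponent in `x_1,…,x_n` and `k` that of `x_{n+1}`. Then `I` corresponds to
the pairs with `x^d ∈ I_k`, the piece `u x_{n+1}^k K[Z]` to `A × {k}` and the piece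
`u x_{n+1}^β K[Z ∪ {x_{n+1}}]` to `A × [β, ∞)`, where `A` is the exponent set of `u K[Z]`.
The slices `k < β` are covered disjointly by the decompositions of the `I_k`, and the slices
`k ≥ β` by that of `I_β`, since `I_k = I_β` there.
-/

open Function Finsupp

namespace MvPolynomial

variable {K σ : Type*} [Field K]

lemma iSup_restrictSupport {ι : Sort*} (s : ι → Set (σ →₀ ℕ)) :
    ⨆ i, restrictSupport K (s i) = restrictSupport K (⋃ i, s i) := by
  simp only [restrictSupport_eq_span, Set.image_iUnion, Submodule.span_iUnion]

lemma disjoint_restrictSupport_iff {s t : Set (σ →₀ ℕ)} :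
    Disjoint (restrictSupport K s) (restrictSupport K t) ↔ Disjoint s t := by
  refine ⟨fun h => Set.disjoint_left.2 fun d hs ht => ?_, fun h => ?_⟩
  · have := Submodule.disjoint_def.1 h (monomial d (1 : K)) (by simp [hs]) (by simp [ht])
    simp at this
  · refine Submodule.disjoint_def.2 fun p hs ht => ?_
    rw [mem_restrictSupport_iff] at hs ht
    rw [← support_eq_empty, ← Finset.coe_eq_empty, ← Set.subset_empty_iff, ← h.inter_eq]
    exact Set.subset_inter hs ht

lemma iSupIndep_restrictSupport_iff {ι : Type*} {s : ι → Set (σ →₀ ℕ)} :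
    iSupIndep (fun i => restrictSupport K (s i)) ↔ Pairwise (Disjoint on s) := by
  refine ⟨fun h i j hij => disjoint_restrictSupport_iff.1 (h.pairwiseDisjoint hij),
    fun h i => ?_⟩
  simp only [iSup_restrictSupport, disjoint_restrictSupport_iff, Set.disjoint_iUnion_right]
  exact fun j hji => h hji.symm

lemma restrictScalars_eq_restrictSupport_of_isMonomialIdeal {I : Ideal (MvPolynomial σ K)}
    (hI : IsMonomialIdeal I) :
    I.restrictScalars K = restrictSupport K {d | monomial d 1 ∈ I} := by
  classical
  obtain ⟨G, rfl⟩ := hI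
  ext p
  simp [mem_ideal_span_monomial_image, mem_restrictSupport_iff, Set.subset_def, support_monomial]

end MvPolynomial

def stanleyExponents {σ : Type*} (d : σ →₀ ℕ) (Z : Finset σ) : Set (σ →₀ ℕ) :=
  {D | d ≤ D ∧ ∀ i ∉ Z, D i = d i}

lemma stanleySpace_eq_restrictSupport (K : Type*) [Field K] {σ : Type*} (d : σ →₀ ℕ)
    (Z : Finset σ) : stanleySpace K d Z = restrictSupport K (stanleyExponents d Z) := by
  rw [stanleySpace, restrictSupport_eq_span]
  congr 1
  ext m
  constructor
  · rintro ⟨e, he, rfl⟩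
    refine ⟨d + e, ⟨le_self_add, fun i hi => ?_⟩, rfl⟩
    simpa using notMem_support_iff.1 fun h => hi (he h)
  · rintro ⟨D, ⟨hle, hZ⟩, rfl⟩
    refine ⟨D - d, fun i hi => ?_, by rw [add_tsub_cancel_of_le hle]⟩
    by_contra hiZ
    simp [hZ i hiZ] at hi

lemma pairwise_disjoint_and_iUnion_of_stanleyDecomposition {K σ ι : Type*} [Field K]
    {J : Ideal (MvPolynomial σ K)} {u : ι → σ →₀ ℕ} {Z : ι → Finset σ}
    (h : iSupIndep (fun i => stanleySpace K (u i) (Z i)) ∧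
      ⨆ i, stanleySpace K (u i) (Z i) = J.restrictScalars K) :
    Pairwise (Disjoint on fun i => stanleyExponents (u i) (Z i)) ∧
      ⋃ i, stanleyExponents (u i) (Z i) = {d | monomial d 1 ∈ J} := by
  simp only [stanleySpace_eq_restrictSupport, iSupIndep_restrictSupport_iff,
    iSup_restrictSupport] at h
  refine ⟨h.1, Set.ext fun d => ?_⟩
  simpa using SetLike.ext_iff.1 h.2 (monomial d 1)

namespace Finsupp

variable {M : Type*} [AddCommMonoid M] {n : ℕ}

@[simp]
lemma mapDomain_castSucc_apply_castSucc (d : Fin n →₀ M) (i : Fin n) :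
    mapDomain Fin.castSucc d i.castSucc = d i :=
  mapDomain_apply (Fin.castSucc_injective n) d i

@[simp]
lemma mapDomain_castSucc_apply_last (d : Fin n →₀ M) :
    mapDomain Fin.castSucc d (Fin.last n) = 0 :=
  mapDomain_of_notMem_range _ _ (by simp [Fin.range_castSucc])

noncomputable def snocEquiv : (Fin n →₀ M) × M ≃ (Fin (n + 1) →₀ M) where
  toFun p := mapDomain Fin.castSucc p.1 + single (Fin.last n) p.2
  invFun D := (equivFunOnFinite.symm fun i => D i.castSucc, D (Fin.last n))
  left_inv p := by ext i <;> simp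
  right_inv D := by
    ext i
    induction i using Fin.lastCases <;> simp

@[simp]
lemma snocEquiv_apply_castSucc (d : Fin n →₀ M) (k : M) (i : Fin n) :
    snocEquiv (d, k) i.castSucc = d i := by
  simp [snocEquiv]

@[simp]
lemma snocEquiv_apply_last (d : Fin n →₀ M) (k : M) : snocEquiv (d, k) (Fin.last n) = k := by
  simp [snocEquiv]

lemma snocEquiv_le_snocEquiv_iff [LE M] {d d' : Fin n →₀ M} {k k' : M} :
    snocEquiv (d, k) ≤ snocEquiv (d', k') ↔ d ≤ d' ∧ k ≤ k' := by
  simp [Finsupp.le_def, Fin.forall_fin_succ']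

end Finsupp

section SnocExponents

variable {n : ℕ}

lemma stanleyExponents_snocEquiv_image_castSucc (d : Fin n →₀ ℕ) (k : ℕ) (Z : Finset (Fin n)) :
    stanleyExponents (snocEquiv (d, k)) (Z.image Fin.castSucc) =
      snocEquiv '' (stanleyExponents d Z ×ˢ {k}) := by
  ext D
  obtain ⟨⟨d', k'⟩, rfl⟩ := snocEquiv.surjective D
  simp +contextual [stanleyExponents, snocEquiv_le_snocEquiv_iff, Fin.forall_fin_succ', and_assoc]

lemma stanleyExponents_snocEquiv_insert_last (d : Fin n →₀ ℕ) (k : ℕ) (Z : Finset (Fin n)) :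
    stanleyExponents (snocEquiv (d, k)) (insert (Fin.last n) (Z.image Fin.castSucc)) =
      snocEquiv '' (stanleyExponents d Z ×ˢ Set.Ici k) := by
  ext D
  obtain ⟨⟨d', k'⟩, rfl⟩ := snocEquiv.surjective D
  simp [stanleyExponents, snocEquiv_le_snocEquiv_iff, Fin.forall_fin_succ', and_right_comm]

variable (K : Type*) [Field K]

lemma janetPiece_eq_stanleySpace (k : ℕ) (d : Fin n →₀ ℕ) (Z : Finset (Fin (n + 1))) :
    janetPiece K n k d Z = stanleySpace K (snocEquiv (d, k)) Z :=
  rfl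

lemma monomial_snocEquiv_mem_shiftUp_iff (k : ℕ) (V : Submodule K (MvPolynomial (Fin n) K))
    (d : Fin n →₀ ℕ) :
    monomial (snocEquiv (d, k)) (1 : K) ∈ shiftUp K n k V ↔ monomial d 1 ∈ V := by
  let f := LinearMap.mulLeft K ((X (Fin.last n) : MvPolynomial (Fin (n + 1)) K) ^ k) ∘ₗ
    (rename Fin.castSucc : MvPolynomial (Fin n) K →ₐ[K] MvPolynomial (Fin (n + 1)) K).toLinearMap
  have hf : Injective f := (mul_right_injective₀ (pow_ne_zero k (X_ne_zero _))).comp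
    (rename_injective _ (Fin.castSucc_injective n))
  have hmonomial : f (monomial d 1) = monomial (snocEquiv (d, k)) 1 := by
    simp [f, rename_monomial, X_pow_eq_monomial, monomial_mul, snocEquiv, add_comm]
  rw [shiftUp, ← Submodule.map_comp, ← hmonomial, ← Submodule.mem_comap,
    Submodule.comap_map_eq_of_injective hf]

variable {K}

lemma monomial_snocEquiv_mem_iff_of_inf_shiftUp {I : Ideal (MvPolynomial (Fin (n + 1)) K)}
    {J : Ideal (MvPolynomial (Fin n) K)} {k : ℕ}
    (h : I.restrictScalars K ⊓ shiftUp K n k ⊤ = shiftUp K n k (J.restrictScalars K))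
    (d : Fin n →₀ ℕ) : monomial (snocEquiv (d, k)) (1 : K) ∈ I ↔ monomial d 1 ∈ J := by
  simpa [monomial_snocEquiv_mem_shiftUp_iff] using
    SetLike.ext_iff.1 h (monomial (snocEquiv (d, k)) 1)

end SnocExponents

section JanetFamily

variable {α : Type*} {ι : ℕ → Type*}

def janetFamily (A : ∀ k, ι k → Set α) (β : ℕ) : (Σ k : Fin β, ι k) ⊕ ι β → Set (α × ℕ) :=
  Sum.elim (fun p => A p.1 p.2 ×ˢ {(p.1 : ℕ)}) (fun i => A β i ×ˢ Set.Ici β)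

variable {A : ∀ k, ι k → Set α} {β : ℕ}

lemma pairwise_disjoint_janetFamily (hA : ∀ k ≤ β, Pairwise (Disjoint on A k)) :
    Pairwise (Disjoint on janetFamily A β) := by
  rintro (⟨k, i⟩ | i) (⟨k', i'⟩ | i') hne <;>
    simp only [onFun, janetFamily, Sum.elim_inl, Sum.elim_inr, Set.disjoint_prod]
  · by_cases hk : k = k'
    · subst hk
      exact Or.inl (hA k k.2.le fun h => hne (by rw [h]))
    · exact Or.inr (Set.disjoint_singleton.2 (Fin.val_injective.ne hk))
  · exact Or.inr (Set.disjoint_singleton_left.2 (not_le.2 k.2))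
  · exact Or.inr (Set.disjoint_singleton_right.2 (not_le.2 k'.2))
  · exact Or.inl (hA β le_rfl fun h => hne (by rw [h]))

lemma iUnion_janetFamily {E : ℕ → Set α} (hA : ∀ k ≤ β, ⋃ i, A k i = E k)
    (hE : ∀ γ, β ≤ γ → E γ = E β) :
    ⋃ x, janetFamily A β x = {p | p.1 ∈ E p.2} := by
  ext ⟨d, k⟩
  simp only [Set.mem_iUnion, Sum.exists, Sigma.exists, janetFamily, Sum.elim_inl, Sum.elim_inr,
    Set.mem_prod, Set.mem_singleton_iff, Set.mem_Ici, Set.mem_ofPred_eq]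
  rcases lt_or_ge k β with hk | hk
  · rw [← hA k hk.le, Set.mem_iUnion]
    constructor
    · rintro (⟨a, i, hi, rfl⟩ | ⟨i, -, hβk⟩)
      · exact ⟨i, hi⟩
      · exact absurd hk (not_lt.2 hβk)
    · rintro ⟨i, hi⟩
      exact Or.inl ⟨⟨k, hk⟩, i, hi, rfl⟩
  · rw [hE k hk, ← hA β le_rfl, Set.mem_iUnion]
    constructor
    · rintro (⟨a, i, -, rfl⟩ | ⟨i, hi, -⟩)
      · exact absurd a.2 (not_lt.2 hk)
      · exact ⟨i, hi⟩
    · rintro ⟨i, hi⟩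
      exact Or.inr ⟨i, hi, hk⟩

end JanetFamily

section JanetPieces

variable {K : Type*} [Field K] {n : ℕ}

lemma sumElim_janetPiece_eq_restrictSupport {ι : ℕ → Type*} (β : ℕ)
    (u : ∀ k, ι k → (Fin n →₀ ℕ)) (Z : ∀ k, ι k → Finset (Fin n))
    (x : (Σ k : Fin β, ι k) ⊕ ι β) :
    Sum.elim
        (fun p : Σ k : Fin β, ι k =>
          janetPiece K n p.1 (u p.1 p.2) ((Z p.1 p.2).image Fin.castSucc))
        (fun i => janetPiece K n β (u β i) (insert (Fin.last n) ((Z β i).image Fin.castSucc))) x =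
      restrictSupport K
        (snocEquiv '' janetFamily (fun k i => stanleyExponents (u k i) (Z k i)) β x) := by
  rcases x with ⟨k, i⟩ | i <;>
    simp only [janetFamily, Sum.elim_inl, Sum.elim_inr, janetPiece_eq_stanleySpace,
      stanleySpace_eq_restrictSupport, stanleyExponents_snocEquiv_image_castSucc,
      stanleyExponents_snocEquiv_insert_last]

lemma setOf_monomial_mem_eq_image_snocEquiv {I : Ideal (MvPolynomial (Fin (n + 1)) K)}
    {Ik : ℕ → Ideal (MvPolynomial (Fin n) K)}
    (hIk : ∀ k, I.restrictScalars K ⊓ shiftUp K n k ⊤ =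
      shiftUp K n k ((Ik k).restrictScalars K)) :
    {D | monomial D (1 : K) ∈ I} = snocEquiv '' {p | monomial p.1 (1 : K) ∈ Ik p.2} := by
  ext D
  obtain ⟨⟨d, k⟩, rfl⟩ := snocEquiv.surjective D
  simp [monomial_snocEquiv_mem_iff_of_inf_shiftUp (hIk k)]

end JanetPieces

theorem janet_stanley_decomposition_general (K : Type*) [Field K] (n : ℕ)
    (I : Ideal (MvPolynomial (Fin (n + 1)) K)) (hI : IsMonomialIdeal I)
    (Ik : ℕ → Ideal (MvPolynomial (Fin n) K))
    (hIk : ∀ k, Submodule.restrictScalars K I ⊓ shiftUp K n k ⊤ =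
      shiftUp K n k (Submodule.restrictScalars K (Ik k)))
    (β : ℕ) (hstab : ∀ γ, β ≤ γ → Ik γ = Ik β)
    (r : ℕ → ℕ) (u : ∀ k, Fin (r k) → (Fin n →₀ ℕ)) (Z : ∀ k, Fin (r k) → Finset (Fin n))
    (hdec : ∀ k ≤ β, iSupIndep (fun i => stanleySpace K (u k i) (Z k i)) ∧
      (⨆ i, stanleySpace K (u k i) (Z k i)) = Submodule.restrictScalars K (Ik k)) :
    iSupIndep (fun x : (Σ k : Fin β, Fin (r k)) ⊕ Fin (r β) =>
      Sum.elim
        (fun p : Σ k : Fin β, Fin (r k) =>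
          janetPiece K n (p.1 : ℕ) (u (p.1 : ℕ) p.2)
            ((Z (p.1 : ℕ) p.2).image Fin.castSucc))
        (fun i : Fin (r β) =>
          janetPiece K n β (u β i)
            (insert (Fin.last n) ((Z β i).image Fin.castSucc))) x) ∧
    (⨆ x : (Σ k : Fin β, Fin (r k)) ⊕ Fin (r β),
      Sum.elim
        (fun p : Σ k : Fin β, Fin (r k) =>
          janetPiece K n (p.1 : ℕ) (u (p.1 : ℕ) p.2)
            ((Z (p.1 : ℕ) p.2).image Fin.castSucc))
        (fun i : Fin (r β) =>
          janetPiece K n β (u β i)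
            (insert (Fin.last n) ((Z β i).image Fin.castSucc))) x) =
      Submodule.restrictScalars K I := by
  have hslices (k : ℕ) (hk : k ≤ β) :=
    pairwise_disjoint_and_iUnion_of_stanleyDecomposition (hdec k hk)
  have hstab_exponents (γ : ℕ) (hγ : β ≤ γ) :
      {d | monomial d (1 : K) ∈ Ik γ} = {d | monomial d 1 ∈ Ik β} := by
    rw [hstab γ hγ]
  simp only [sumElim_janetPiece_eq_restrictSupport (ι := fun k => Fin (r k)) β u Z,
    iSupIndep_restrictSupport_iff, iSup_restrictSupport, ← Set.image_iUnion,
    restrictScalars_eq_restrictSupport_of_isMonomialIdeal hI,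
    setOf_monomial_mem_eq_image_snocEquiv hIk,
    iUnion_janetFamily (fun k hk => (hslices k hk).2) hstab_exponents]
  exact ⟨fun x y hxy => (Set.disjoint_image_iff snocEquiv.injective).2
    (pairwise_disjoint_janetFamily (fun k hk => (hslices k hk).1) hxy), rfl⟩

/-- (Here `S = K[x_1,…,x_{n+1}]`, `S' = K[x_1,…,x_n]`, `n ≥ 1`.) Let
`I ⊆ S` be a monomial ideal whose slices `I_k` (determined by
`I ∩ x_{n+1}^k S' = x_{n+1}^k I_k`) stabilize exactly at `β`. If every `I_k` with
`k ≤ β` has a Stanley decomposition `I_k = ⊕_{i=1}^{r_k} u_{i,k} K[Z_{i,k}]`, then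
`I = (⊕_{0 ≤ k < β} ⊕_i u_{i,k} x_{n+1}^k K[Z_{i,k}]) ⊕
(⊕_i u_{i,β} x_{n+1}^β K[Z_{i,β} ∪ {x_{n+1}}])` is a Stanley decomposition of `I`. -/
theorem janet_stanley_decomposition (K : Type*) [Field K] (n : ℕ) (hn : 1 ≤ n)
    (I : Ideal (MvPolynomial (Fin (n + 1)) K)) (hI : IsMonomialIdeal I)
    (Ik : ℕ → Ideal (MvPolynomial (Fin n) K)) (hIkmono : ∀ k, IsMonomialIdeal (Ik k))
    (hIk : ∀ k, Submodule.restrictScalars K I ⊓ shiftUp K n k ⊤ =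
      shiftUp K n k (Submodule.restrictScalars K (Ik k)))
    (β : ℕ) (hstab : ∀ γ, β ≤ γ → Ik γ = Ik β)
    (hmin : ∀ β' < β, ¬ (∀ γ, β' ≤ γ → Ik γ = Ik β'))
    (r : ℕ → ℕ) (u : ∀ k, Fin (r k) → (Fin n →₀ ℕ)) (Z : ∀ k, Fin (r k) → Finset (Fin n))
    (hdec : ∀ k ≤ β, iSupIndep (fun i => stanleySpace K (u k i) (Z k i)) ∧
      (⨆ i, stanleySpace K (u k i) (Z k i)) = Submodule.restrictScalars K (Ik k)) :
    iSupIndep (fun x : (Σ k : Fin β, Fin (r k)) ⊕ Fin (r β) =>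
      Sum.elim
        (fun p : Σ k : Fin β, Fin (r k) =>
          janetPiece K n (p.1 : ℕ) (u (p.1 : ℕ) p.2)
            ((Z (p.1 : ℕ) p.2).image Fin.castSucc))
        (fun i : Fin (r β) =>
          janetPiece K n β (u β i)
            (insert (Fin.last n) ((Z β i).image Fin.castSucc))) x) ∧
    (⨆ x : (Σ k : Fin β, Fin (r k)) ⊕ Fin (r β),
      Sum.elim
        (fun p : Σ k : Fin β, Fin (r k) =>
          janetPiece K n (p.1 : ℕ) (u (p.1 : ℕ) p.2)
            ((Z (p.1 : ℕ) p.2).image Fin.castSucc))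
        (fun i : Fin (r β) =>
          janetPiece K n β (u β i)
            (insert (Fin.last n) ((Z β i).image Fin.castSucc))) x) =
      Submodule.restrictScalars K I :=
  janet_stanley_decomposition_general K n I hI Ik hIk β hstab r u Z hdec
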